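/- arXiv:2310.07925 — 2 statements merged into one kernel-verified Lean document; each statement's English description precedes it below -/
import Mathlib

section
/- (Combined prediction-step bound for Algorithm 1) Let x⁻_{k+1} = x_k − δ·(|∇_t f(x_k,t_k)|/‖∇_x f(x_k,t_k)‖²)·∇_x f(x_k,t_k) if ‖∇_x f(x_k,t_k)‖ ≥ ε and x⁻_{k+1} = x_k otherwise. Then |f(x⁻_{k+1}, t_k + δ) − f(x_k, t_k)| ≤ max(γδ², μδ), where γ = 2K1/δ + (M/(2ε²))K1² + K3/2 + K1K2/ε and μ = K1 + (δ/2)K3. -/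
/-!
Write `x⁻ - x_k = -(δ|∇_t f|/‖∇_x f‖²)∇_x f =: d`. When the step is taken, `‖d‖ ≤ δK1/ε` and
`⟪∇_x f(x_k,t_k), d⟫ = -δ|∇_t f|`, and the change of `f` splits into a descent-lemma remainder at
time `t_k + δ` (at most `(M/2)‖d‖²`), the first-order term `⟪∇_x f(x_k,t_k), d⟫`, the drift
`⟪∇_x f(x_k,t_k+δ) - ∇_x f(x_k,t_k), d⟫` (at most `K2δ‖d‖`) and the time increment
`f(x_k,t_k+δ) - f(x_k,t_k)` (at most `K1δ`); together these are at most `γδ²`. When the step is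
not taken only the time increment remains, which is at most `μδ`.
-/

open RealInnerProductSpace Set

theorem norm_sub_le_mul_of_hasDerivAt_of_nonneg {F : Type*} [NormedAddCommGroup F]
    [NormedSpace ℝ F] {u u' : ℝ → F} {C t δ : ℝ}
    (hu : ∀ s, 0 ≤ s → HasDerivAt u (u' s) s) (hC : ∀ s, 0 ≤ s → ‖u' s‖ ≤ C)
    (ht : 0 ≤ t) (hδ : 0 ≤ δ) : ‖u (t + δ) - u t‖ ≤ C * δ := by
  have := norm_image_sub_le_of_norm_deriv_le_segment'
    (fun s hs => (hu s (ht.trans hs.1)).hasDerivWithinAt) (fun s hs => hC s (ht.trans hs.1))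
    (t + δ) ⟨by linarith, le_rfl⟩
  rwa [add_sub_cancel_left] at this

section InnerProductSpace

variable {F : Type*} [NormedAddCommGroup F] [InnerProductSpace ℝ F]

theorem norm_smul_div_norm_sq (c : ℝ) (g : F) : ‖(c / ‖g‖ ^ 2) • g‖ = |c| / ‖g‖ := by
  rcases eq_or_ne g 0 with rfl | hg
  · simp
  rw [norm_smul, norm_div, norm_pow, norm_norm, Real.norm_eq_abs]
  field_simp [norm_ne_zero_iff.2 hg]

theorem inner_smul_div_norm_sq (c : ℝ) {g : F} (hg : g ≠ 0) : ⟪g, (c / ‖g‖ ^ 2) • g⟫ = c := by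
  rw [real_inner_smul_right, real_inner_self_eq_norm_sq]
  field_simp [norm_ne_zero_iff.2 hg]

end InnerProductSpace

section LipschitzGradient

variable {E : Type*} [NormedAddCommGroup E] [InnerProductSpace ℝ E] [CompleteSpace E]

theorem abs_sub_sub_inner_le_of_lipschitz_gradient {φ : E → ℝ} {g : E → E} {M : ℝ}
    (hφ : ∀ x, HasGradientAt φ (g x) x) (hL : ∀ x y, ‖g x - g y‖ ≤ M * ‖x - y‖) (x y : E) :
    |φ y - φ x - ⟪g x, y - x⟫| ≤ M / 2 * ‖y - x‖ ^ 2 := by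
  set d := y - x
  have hline : ∀ s : ℝ, HasDerivAt (fun s : ℝ => x + s • d) d s := fun s => by
    simpa using ((hasDerivAt_id s).smul_const d).const_add x
  have hderiv : ∀ s : ℝ, HasDerivAt (fun s => φ (x + s • d) - φ x - s * ⟪g x, d⟫)
      (⟪g (x + s • d), d⟫ - ⟪g x, d⟫) s := fun s => by
    have hcomp := (hφ (x + s • d)).hasFDerivAt.comp_hasDerivAt s (hline s)
    simp only [InnerProductSpace.toDual_apply_apply] at hcomp
    exact (hcomp.sub_const (φ x)).sub (hasDerivAt_mul_const _)
  have hbound : ∀ s ∈ Ico (0 : ℝ) 1, ‖⟪g (x + s • d), d⟫ - ⟪g x, d⟫‖ ≤ M * ‖d‖ ^ 2 * s := by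
    intro s hs
    calc ‖⟪g (x + s • d), d⟫ - ⟪g x, d⟫‖ = ‖⟪g (x + s • d) - g x, d⟫‖ := by rw [inner_sub_left]
      _ ≤ ‖g (x + s • d) - g x‖ * ‖d‖ := norm_inner_le_norm _ _
      _ ≤ M * ‖(x + s • d) - x‖ * ‖d‖ := by gcongr; exact hL _ _
      _ = M * ‖d‖ ^ 2 * s := by
        rw [add_sub_cancel_left, norm_smul, Real.norm_of_nonneg hs.1]; ring
  have hB (s : ℝ) : HasDerivAt (fun s => M * ‖d‖ ^ 2 / 2 * s ^ 2) (M * ‖d‖ ^ 2 * s) s := by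
    refine ((hasDerivAt_pow 2 s).const_mul _).congr_deriv ?_
    norm_num
    ring
  have := image_norm_le_of_norm_deriv_right_le_deriv_boundary
    (fun s _ => (hderiv s).continuousAt.continuousWithinAt)
    (fun s _ => (hderiv s).hasDerivWithinAt) (by simp) hB hbound (right_mem_Icc.2 zero_le_one)
  simpa [d, mul_comm, mul_left_comm, mul_assoc, div_eq_mul_inv] using this

theorem abs_sub_le_of_lipschitz_gradient {φ : E → ℝ} {g : E → E} {M : ℝ}
    (hφ : ∀ x, HasGradientAt φ (g x) x) (hL : ∀ x y, ‖g x - g y‖ ≤ M * ‖x - y‖)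
    (c : ℝ) (x y g₀ : E) :
    |φ y - c| ≤ M / 2 * ‖y - x‖ ^ 2 + |⟪g₀, y - x⟫| + ‖g x - g₀‖ * ‖y - x‖ + |φ x - c| := by
  have hsplit : φ y - c = (φ y - φ x - ⟪g x, y - x⟫) + ⟪g₀, y - x⟫ + ⟪g x - g₀, y - x⟫
      + (φ x - c) := by
    rw [inner_sub_left]; ring
  have hdesc := abs_sub_sub_inner_le_of_lipschitz_gradient hφ hL x y
  have hcs := abs_real_inner_le_norm (g x - g₀) (y - x)
  rw [hsplit]
  linarith [abs_add_le (φ y - φ x - ⟪g x, y - x⟫ + ⟪g₀, y - x⟫ + ⟪g x - g₀, y - x⟫) (φ x - c),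
    abs_add_three (φ y - φ x - ⟪g x, y - x⟫) ⟪g₀, y - x⟫ ⟪g x - g₀, y - x⟫]

theorem abs_sub_le_of_normalized_gradient_step {φ : E → ℝ} {g : E → E} {M : ℝ}
    (hφ : ∀ x, HasGradientAt φ (g x) x) (hL : ∀ x y, ‖g x - g y‖ ≤ M * ‖x - y‖) (hM : 0 ≤ M)
    (c₀ : ℝ) (x g₀ : E) {ε c : ℝ} (hε : 0 < ε) (hg₀ : ε ≤ ‖g₀‖) (hc : 0 ≤ c) :
    |φ (x - (c / ‖g₀‖ ^ 2) • g₀) - c₀|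
      ≤ M / 2 * (c / ε) ^ 2 + c + ‖g x - g₀‖ * (c / ε) + |φ x - c₀| := by
  have hdist : ‖x - (c / ‖g₀‖ ^ 2) • g₀ - x‖ ≤ c / ε := by
    rw [sub_sub_cancel_left, norm_neg, norm_smul_div_norm_sq, abs_of_nonneg hc]
    gcongr
  have hfirst_order : |⟪g₀, x - (c / ‖g₀‖ ^ 2) • g₀ - x⟫| = c := by
    rw [sub_sub_cancel_left, inner_neg_right,
      inner_smul_div_norm_sq _ (norm_pos_iff.1 (hε.trans_le hg₀)), abs_neg, abs_of_nonneg hc]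
  calc _ ≤ _ := abs_sub_le_of_lipschitz_gradient hφ hL c₀ x _ g₀
    _ ≤ _ := by rw [hfirst_order]; gcongr

end LipschitzGradient

theorem prediction_step_bound_combined_general
    {E : Type*} [NormedAddCommGroup E] [InnerProductSpace ℝ E] [CompleteSpace E]
    (f : E → ℝ → ℝ) (gx : E → ℝ → E) (ft : E → ℝ → ℝ)
    (fxt : E → ℝ → E) (ftt : E → ℝ → ℝ)
    (m M K1 K2 K3 : ℝ) (hm : 0 < m) (hmM : m ≤ M)
    (hgrad : ∀ (x : E) (t : ℝ), 0 ≤ t → HasGradientAt (fun y => f y t) (gx x t) x)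
    (hft : ∀ (x : E) (t : ℝ), 0 ≤ t → HasDerivAt (fun s => f x s) (ft x t) t)
    (hfxt : ∀ (x : E) (t : ℝ), 0 ≤ t → HasDerivAt (fun s => gx x s) (fxt x t) t)
    (hLip : ∀ (t : ℝ), 0 ≤ t → ∀ x y : E, ‖gx x t - gx y t‖ ≤ M * ‖x - y‖)
    (hK1 : ∀ (x : E) (t : ℝ), 0 ≤ t → |ft x t| ≤ K1)
    (hK2 : ∀ (x : E) (t : ℝ), 0 ≤ t → ‖fxt x t‖ ≤ K2)
    (hK3 : ∀ (x : E) (t : ℝ), 0 ≤ t → |ftt x t| ≤ K3)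
    (xk : E) (tk δ ε : ℝ) (htk : 0 ≤ tk) (hδ : 0 < δ) (hε : 0 < ε)
    (xminus : E)
    (hxminus : xminus =
      if ε ≤ ‖gx xk tk‖ then
        xk - (δ * |ft xk tk| / ‖gx xk tk‖ ^ 2) • gx xk tk
      else xk) :
    |f xminus (tk + δ) - f xk tk| ≤
      max ((2 * K1 / δ + M / (2 * ε ^ 2) * K1 ^ 2 + K3 / 2 + K1 * K2 / ε) * δ ^ 2)
        ((K1 + δ / 2 * K3) * δ) := by
  have hK1_nonneg : 0 ≤ K1 := (abs_nonneg _).trans (hK1 xk tk htk)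
  have hK2_nonneg : 0 ≤ K2 := (norm_nonneg _).trans (hK2 xk tk htk)
  have hK3_nonneg : 0 ≤ K3 := (abs_nonneg _).trans (hK3 xk tk htk)
  have hf_time : |f xk (tk + δ) - f xk tk| ≤ K1 * δ := by
    simpa using norm_sub_le_mul_of_hasDerivAt_of_nonneg (hft xk)
      (fun s hs => by simpa using hK1 xk s hs) htk hδ.le
  split_ifs at hxminus with hstep
  · subst hxminus
    have htk' : 0 ≤ tk + δ := by positivity
    have hM : 0 ≤ M := hm.le.trans hmM
    have hstep_bound := abs_sub_le_of_normalized_gradient_step (hgrad · _ htk') (hLip _ htk')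
      hM (f xk tk) xk (gx xk tk) hε hstep (by positivity : 0 ≤ δ * |ft xk tk|)
    have hg_time : ‖gx xk (tk + δ) - gx xk tk‖ ≤ K2 * δ :=
      norm_sub_le_mul_of_hasDerivAt_of_nonneg (hfxt xk) (hK2 xk) htk hδ.le
    have ha : |ft xk tk| ≤ K1 := hK1 xk tk htk
    refine le_max_of_le_left (hstep_bound.trans ?_)
    calc _ ≤ M / 2 * (δ * K1 / ε) ^ 2 + δ * K1 + K2 * δ * (δ * K1 / ε) + K1 * δ := by gcongr
      _ = (2 * K1 / δ + M / (2 * ε ^ 2) * K1 ^ 2 + K1 * K2 / ε) * δ ^ 2 := by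
          field_simp
          ring
      _ ≤ _ := mul_le_mul_of_nonneg_right (by linarith) (sq_nonneg δ)
  · subst hxminus
    refine le_max_of_le_right (hf_time.trans ?_)
    nlinarith [mul_nonneg hδ.le hK3_nonneg]

/-- combined prediction-step bound for Algorithm 1:
with the prediction `x⁻ = x_k − δ(|∇_t f|/‖∇_x f‖²)∇_x f` if `‖∇_x f‖ ≥ ε`
and `x⁻ = x_k` otherwise, `|f(x⁻, t_k + δ) − f(x_k, t_k)| ≤ max(γδ², μδ)` with
`γ = 2K1/δ + (M/(2ε²))K1² + K3/2 + K1K2/ε` and `μ = K1 + (δ/2)K3`. -/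
theorem prediction_step_bound_combined
    {E : Type*} [NormedAddCommGroup E] [InnerProductSpace ℝ E] [CompleteSpace E]
    (f : E → ℝ → ℝ) (gx : E → ℝ → E) (ft : E → ℝ → ℝ)
    (fxt : E → ℝ → E) (ftt : E → ℝ → ℝ)
    (m M K1 K2 K3 : ℝ) (hm : 0 < m) (hmM : m ≤ M)
    (hgrad : ∀ (x : E) (t : ℝ), 0 ≤ t → HasGradientAt (fun y => f y t) (gx x t) x)
    (hft : ∀ (x : E) (t : ℝ), 0 ≤ t → HasDerivAt (fun s => f x s) (ft x t) t)
    (hfxt : ∀ (x : E) (t : ℝ), 0 ≤ t → HasDerivAt (fun s => gx x s) (fxt x t) t)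
    (hftt : ∀ (x : E) (t : ℝ), 0 ≤ t → HasDerivAt (fun s => ft x s) (ftt x t) t)
    (hsc : ∀ (t : ℝ), 0 ≤ t → ∀ x y : E, m * ‖x - y‖ ^ 2 ≤ ⟪gx x t - gx y t, x - y⟫)
    (hLip : ∀ (t : ℝ), 0 ≤ t → ∀ x y : E, ‖gx x t - gx y t‖ ≤ M * ‖x - y‖)
    (hK1 : ∀ (x : E) (t : ℝ), 0 ≤ t → |ft x t| ≤ K1)
    (hK2 : ∀ (x : E) (t : ℝ), 0 ≤ t → ‖fxt x t‖ ≤ K2)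
    (hK3 : ∀ (x : E) (t : ℝ), 0 ≤ t → |ftt x t| ≤ K3)
    (xk : E) (tk δ ε : ℝ) (htk : 0 ≤ tk) (hδ : 0 < δ) (hε : 0 < ε)
    (xminus : E)
    (hxminus : xminus =
      if ε ≤ ‖gx xk tk‖ then
        xk - (δ * |ft xk tk| / ‖gx xk tk‖ ^ 2) • gx xk tk
      else xk) :
    |f xminus (tk + δ) - f xk tk| ≤
      max ((2 * K1 / δ + M / (2 * ε ^ 2) * K1 ^ 2 + K3 / 2 + K1 * K2 / ε) * δ ^ 2)
        ((K1 + δ / 2 * K3) * δ) :=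
  prediction_step_bound_combined_general f gx ft fxt ftt m M K1 K2 K3 hm hmM hgrad hft hfxt hLip hK1
    hK2 hK3 xk tk δ ε htk hδ hε xminus hxminus
end

section
/- (Remark 1, ultimate tracking bound of Algorithm 1) Let (x_k) be generated by Algorithm 1 (prediction x⁻_{k+1} = x_k − δ·(|∇_t f(x_k,t_k)|/‖∇_x f(x_k,t_k)‖²)·∇_x f(x_k,t_k) if ‖∇_x f(x_k,t_k)‖ ≥ ε, else x⁻_{k+1} = x_k; update x_{k+1} = x⁻_{k+1} − α·∇_x f(x⁻_{k+1}, t_{k+1})) with 0 < α ≤ 1/(2M). Then limsup_{k→∞} (f(x_k,t_k) − f*(t_k)) ≤ ψ/(4κ²α²m) + max(γδ², μδ)/(4κ²α²m²); in particular the effect of the initialization error f(x_0,t_0) − f*(t_0) vanishes as k → ∞ since (1 − 2καm)^k → 0. -/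
/-!
Write `e_k = f(x_k, t_k) - f*(t_k)`. The prediction step moves against `∇ₓf` by a vector of
length at most `δ K₁ / ε`, so by the descent lemma it raises the cost by at most
`M δ² K₁² / (2ε²)`; moving from `t_k` to `t_{k+1}` changes both `f(·, t)` and `f*` by at most
`K₁ δ`. The correction step is a gradient step, and the descent lemma together with the
Polyak–Łojasiewicz inequality `2m (f - f*) ≤ ‖∇ₓf‖²` (a consequence of strong convexity) makes it
contract the error by `ρ = 1 - 2καm`. Hence `e_{k+1} ≤ ρ e_k + γδ²`, so
`limsup e_k ≤ γδ² / (2καm)`, which is below the stated bound because `0 < 2καm ≤ 1`.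
-/

open RealInnerProductSpace Filter Set Topology

theorem le_add_deriv_add_half_of_deriv_le {φ φ' : ℝ → ℝ} {C : ℝ}
    (hd : ∀ s, HasDerivAt φ (φ' s) s) (hC : ∀ s ∈ Icc (0 : ℝ) 1, φ' s ≤ φ' 0 + C * s) :
    φ 1 ≤ φ 0 + φ' 0 + C / 2 := by
  set q : ℝ → ℝ := fun u => φ u - u * φ' 0 - C / 2 * u ^ 2
  have hq : ∀ s, HasDerivAt q (φ' s - φ' 0 - C * s) s := fun s =>
    (((hd s).sub (hasDerivAt_mul_const (φ' 0))).sub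
      ((hasDerivAt_pow 2 s).const_mul (C / 2))).congr_deriv (by norm_num; ring)
  have hanti : AntitoneOn q (Icc 0 1) := by
    refine antitoneOn_of_deriv_nonpos (convex_Icc 0 1)
      (fun s _ => (hq s).continuousAt.continuousWithinAt)
      (fun s _ => (hq s).differentiableAt.differentiableWithinAt) fun s hs => ?_
    rw [interior_Icc] at hs
    rw [(hq s).deriv]
    linarith [hC s (Ioo_subset_Icc_self hs)]
  have := hanti (left_mem_Icc.2 zero_le_one) (right_mem_Icc.2 zero_le_one) zero_le_one
  simp only [q] at this
  linarith

section Smooth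

variable {E : Type*} [NormedAddCommGroup E] [InnerProductSpace ℝ E] [CompleteSpace E]
  {φ : E → ℝ} {g : E → E} {m M : ℝ}

theorem hasDerivAt_comp_add_smul_of_hasGradientAt (hg : ∀ z, HasGradientAt φ (g z) z)
    (y v : E) (s : ℝ) : HasDerivAt (fun u : ℝ => φ (y + u • v)) ⟪g (y + s • v), v⟫ s := by
  have hline : HasDerivAt (fun u : ℝ => y + u • v) v s := by
    simpa using ((hasDerivAt_id s).smul_const v).const_add y
  simpa [InnerProductSpace.toDual_apply_apply, Function.comp_def] using
    (hg (y + s • v)).hasFDerivAt.comp_hasDerivAt s hline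

/-- The descent lemma. -/
theorem le_add_inner_add_sq_of_lipschitz (hg : ∀ z, HasGradientAt φ (g z) z)
    (hLip : ∀ a b, ‖g a - g b‖ ≤ M * ‖a - b‖) (y v : E) :
    φ (y + v) ≤ φ y + ⟪g y, v⟫ + M / 2 * ‖v‖ ^ 2 := by
  have key := le_add_deriv_add_half_of_deriv_le (C := M * ‖v‖ ^ 2)
    (hasDerivAt_comp_add_smul_of_hasGradientAt hg y v) fun s hs => ?_
  · simp only [zero_smul, add_zero, one_smul] at key
    linarith
  · have hgs : ‖g (y + s • v) - g y‖ ≤ M * (s * ‖v‖) := by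
      simpa [norm_smul, abs_of_nonneg hs.1] using hLip (y + s • v) y
    simp only [zero_smul, add_zero]
    calc ⟪g (y + s • v), v⟫ = ⟪g y, v⟫ + ⟪g (y + s • v) - g y, v⟫ := by
          rw [inner_sub_left]; ring
      _ ≤ ⟪g y, v⟫ + ‖g (y + s • v) - g y‖ * ‖v‖ := by gcongr; exact real_inner_le_norm _ _
      _ ≤ ⟪g y, v⟫ + M * (s * ‖v‖) * ‖v‖ := by gcongr
      _ = ⟪g y, v⟫ + M * ‖v‖ ^ 2 * s := by ring

theorem add_inner_add_sq_le_of_strongMonotone (hg : ∀ z, HasGradientAt φ (g z) z)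
    (hsc : ∀ a b, m * ‖a - b‖ ^ 2 ≤ ⟪g a - g b, a - b⟫) (y v : E) :
    φ y + ⟪g y, v⟫ + m / 2 * ‖v‖ ^ 2 ≤ φ (y + v) := by
  have key := le_add_deriv_add_half_of_deriv_le (C := -(m * ‖v‖ ^ 2))
    (fun s => (hasDerivAt_comp_add_smul_of_hasGradientAt hg y v s).neg) fun s hs => ?_
  · simp only [Pi.neg_apply, zero_smul, add_zero, one_smul] at key
    linarith
  · simp only [zero_smul, add_zero]
    suffices m * ‖v‖ ^ 2 * s ≤ ⟪g (y + s • v) - g y, v⟫ by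
      rw [inner_sub_left] at this; linarith
    rcases hs.1.eq_or_lt with rfl | hs0
    · simp
    have h := hsc (y + s • v) y
    rw [add_sub_cancel_left, real_inner_smul_right, norm_smul, Real.norm_eq_abs,
      abs_of_pos hs0] at h
    exact le_of_mul_le_mul_left (by linarith) hs0

/-- The Polyak–Łojasiewicz inequality. -/
theorem mul_sub_le_sq_norm_of_strongMonotone (hm : 0 < m) (hg : ∀ z, HasGradientAt φ (g z) z)
    (hsc : ∀ a b, m * ‖a - b‖ ^ 2 ≤ ⟪g a - g b, a - b⟫) (y z : E) :
    2 * m * (φ y - φ z) ≤ ‖g y‖ ^ 2 := by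
  have hl := add_inner_add_sq_le_of_strongMonotone hg hsc y (z - y)
  rw [add_sub_cancel] at hl
  have hip := neg_le_of_abs_le (abs_real_inner_le_norm (g y) (z - y))
  nlinarith [sq_nonneg (‖g y‖ - m * ‖z - y‖)]

theorem apply_sub_smul_le_of_lipschitz (hg : ∀ z, HasGradientAt φ (g z) z)
    (hLip : ∀ a b, ‖g a - g b‖ ≤ M * ‖a - b‖) (y : E) (s : ℝ) :
    φ (y - s • g y) ≤ φ y - s * (1 - s * M / 2) * ‖g y‖ ^ 2 := by
  have h := le_add_inner_add_sq_of_lipschitz hg hLip y (-(s • g y))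
  rw [← sub_eq_add_neg, inner_neg_right, real_inner_smul_right, real_inner_self_eq_norm_sq,
    norm_neg, norm_smul, Real.norm_eq_abs, mul_pow, sq_abs] at h
  linear_combination h

theorem apply_sub_smul_sub_le_mul_sub (hm : 0 < m) (hg : ∀ z, HasGradientAt φ (g z) z)
    (hsc : ∀ a b, m * ‖a - b‖ ^ 2 ≤ ⟪g a - g b, a - b⟫)
    (hLip : ∀ a b, ‖g a - g b‖ ≤ M * ‖a - b‖) {α : ℝ} (hα : 0 ≤ α) (hαM : α * M ≤ 2)
    (y z : E) : φ (y - α • g y) - φ z ≤ (1 - 2 * (1 - α * M / 2) * α * m) * (φ y - φ z) := by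
  have hstep := apply_sub_smul_le_of_lipschitz hg hLip y α
  have hPL := mul_sub_le_sq_norm_of_strongMonotone hm hg hsc y z
  have hακ : 0 ≤ α * (1 - α * M / 2) := mul_nonneg hα (by linarith)
  nlinarith [mul_le_mul_of_nonneg_left hPL hακ]

end Smooth

theorem abs_sub_le_mul_of_abs_deriv_le {F F' : ℝ → ℝ} {K t δ : ℝ} (hδ : 0 ≤ δ)
    (hd : ∀ u ∈ Icc t (t + δ), HasDerivAt F (F' u) u) (hb : ∀ u ∈ Icc t (t + δ), |F' u| ≤ K) :
    |F (t + δ) - F t| ≤ K * δ := by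
  simpa using norm_image_sub_le_of_norm_deriv_le_segment' (fun u hu => (hd u hu).hasDerivWithinAt)
    (fun u hu => hb u (Ico_subset_Icc_self hu)) (t + δ) (right_mem_Icc.2 (by linarith))

theorem limsup_le_div_of_le_one_sub_mul_add {e : ℕ → ℝ} {b c : ℝ} (hc0 : 0 < c) (hc1 : c ≤ 1)
    (hbdd : IsBoundedUnder (· ≥ ·) atTop e) (he : ∀ k, e (k + 1) ≤ (1 - c) * e k + b) :
    limsup e atTop ≤ b / c := by
  set S := b / c
  have hS : (1 - c) * S + b = S := by
    simp only [S]
    field_simp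
    ring
  have hbound : ∀ k, e k ≤ (1 - c) ^ k * (e 0 - S) + S := by
    intro k
    induction k with
    | zero => simp
    | succ k ih =>
      calc e (k + 1) ≤ (1 - c) * e k + b := he k
        _ ≤ (1 - c) * ((1 - c) ^ k * (e 0 - S) + S) + b := by gcongr
        _ = (1 - c) ^ (k + 1) * (e 0 - S) + S := by rw [pow_succ]; linear_combination hS
  have hlim : Tendsto (fun k => (1 - c) ^ k * (e 0 - S) + S) atTop (𝓝 S) := by
    simpa using ((tendsto_pow_atTop_nhds_zero_of_lt_one (by linarith) (by linarith)).mul_const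
      (e 0 - S)).add_const S
  calc limsup e atTop ≤ limsup (fun k => (1 - c) ^ k * (e 0 - S) + S) atTop :=
        limsup_le_limsup (Eventually.of_forall hbound) hbdd.isCoboundedUnder_le
          hlim.isBoundedUnder_le
    _ = S := hlim.limsup_eq

section TimeVarying

variable {E : Type*} [NormedAddCommGroup E] [InnerProductSpace ℝ E] [CompleteSpace E]
  {f : E → ℝ → ℝ} {gx : E → ℝ → E} {ft : E → ℝ → ℝ} {m M K1 δ ε α : ℝ}

noncomputable def predictionStep (gx : E → ℝ → E) (ft : E → ℝ → ℝ) (δ ε : ℝ) (x : E) (t : ℝ) :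
    E :=
  if ε ≤ ‖gx x t‖ then x - (δ * |ft x t| / ‖gx x t‖ ^ 2) • gx x t else x

theorem apply_predictionStep_le_add {t : ℝ}
    (hgrad : ∀ x, HasGradientAt (fun y => f y t) (gx x t) x)
    (hLip : ∀ x y, ‖gx x t - gx y t‖ ≤ M * ‖x - y‖) (hM : 0 ≤ M) (hδ : 0 ≤ δ) (hε : 0 < ε) {x : E} (hK1 : |ft x t| ≤ K1) :
    f (predictionStep gx ft δ ε x t) t ≤ f x t + M * δ ^ 2 * K1 ^ 2 / (2 * ε ^ 2) := by
  unfold predictionStep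
  split_ifs with hεg
  · set g := gx x t
    set s := δ * |ft x t| / ‖g‖ ^ 2
    have hg : 0 < ‖g‖ := hε.trans_le hεg
    have hsg : s * ‖g‖ ≤ δ * K1 / ε := by
      calc s * ‖g‖ = δ * |ft x t| / ‖g‖ := by simp only [s]; field_simp
        _ ≤ δ * K1 / ε := by
          have : 0 ≤ K1 := (abs_nonneg _).trans hK1
          gcongr
    have hstep := apply_sub_smul_le_of_lipschitz (g := fun y => gx y t) hgrad hLip x s
    have hs : 0 ≤ s * ‖g‖ ^ 2 := by positivity
    have hsg2 := mul_le_mul_of_nonneg_left (pow_le_pow_left₀ (by positivity) hsg 2) hM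
    calc f (x - s • g) t ≤ f x t - s * ‖g‖ ^ 2 + M / 2 * (s * ‖g‖) ^ 2 := by
          linear_combination hstep
      _ ≤ f x t + M * δ ^ 2 * K1 ^ 2 / (2 * ε ^ 2) := by
          rw [div_pow] at hsg2
          field_simp at hsg2 ⊢
          nlinarith
  · linarith [show 0 ≤ M * δ ^ 2 * K1 ^ 2 / (2 * ε ^ 2) by positivity]

theorem apply_predictionStep_sub_le
    (hgrad : ∀ x t, 0 ≤ t → HasGradientAt (fun y => f y t) (gx x t) x)
    (hft : ∀ x t, 0 ≤ t → HasDerivAt (fun s => f x s) (ft x t) t)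
    (hLip : ∀ t, 0 ≤ t → ∀ x y : E, ‖gx x t - gx y t‖ ≤ M * ‖x - y‖)
    (hK1 : ∀ x t, 0 ≤ t → |ft x t| ≤ K1) (hM : 0 ≤ M) (hδ : 0 ≤ δ) (hε : 0 < ε)
    {t : ℝ} (ht : 0 ≤ t) {z : E} (hz : ∀ y, f z t ≤ f y t) (x z' : E) :
    f (predictionStep gx ft δ ε x t) (t + δ) - f z' (t + δ) ≤
      f x t - f z t + (2 * K1 * δ + M * δ ^ 2 * K1 ^ 2 / (2 * ε ^ 2)) := by
  have hpred := apply_predictionStep_le_add (hgrad · t ht) (hLip t ht) hM hδ hε (hK1 x t ht)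
  have hdrift : ∀ w, |f w (t + δ) - f w t| ≤ K1 * δ := fun w =>
    abs_sub_le_mul_of_abs_deriv_le hδ (fun u hu => hft w u (ht.trans hu.1))
      (fun u hu => hK1 w u (ht.trans hu.1))
  have hx := abs_le.1 (hdrift (predictionStep gx ft δ ε x t))
  have hz' := abs_le.1 (hdrift z')
  linarith [hz z']

theorem apply_correctionStep_sub_le_mul (hm : 0 < m)
    (hgrad : ∀ x t, 0 ≤ t → HasGradientAt (fun y => f y t) (gx x t) x)
    (hft : ∀ x t, 0 ≤ t → HasDerivAt (fun s => f x s) (ft x t) t)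
    (hsc : ∀ t, 0 ≤ t → ∀ x y : E, m * ‖x - y‖ ^ 2 ≤ ⟪gx x t - gx y t, x - y⟫)
    (hLip : ∀ t, 0 ≤ t → ∀ x y : E, ‖gx x t - gx y t‖ ≤ M * ‖x - y‖)
    (hK1 : ∀ x t, 0 ≤ t → |ft x t| ≤ K1) (hM : 0 ≤ M) (hδ : 0 ≤ δ) (hε : 0 < ε) (hα : 0 ≤ α)
    (hαM : α * M ≤ 2) (hρ : 2 * (1 - α * M / 2) * α * m ≤ 1)
    {t : ℝ} (ht : 0 ≤ t) {z : E} (hz : ∀ y, f z t ≤ f y t) {x y : E}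
    (hy : y = predictionStep gx ft δ ε x t) (z' : E) :
    f (y - α • gx y (t + δ)) (t + δ) - f z' (t + δ) ≤ (1 - 2 * (1 - α * M / 2) * α * m) *
      (f x t - f z t + (2 * K1 * δ + M * δ ^ 2 * K1 ^ 2 / (2 * ε ^ 2))) := by
  have htδ : 0 ≤ t + δ := by linarith
  calc f (y - α • gx y (t + δ)) (t + δ) - f z' (t + δ)
      ≤ (1 - 2 * (1 - α * M / 2) * α * m) * (f y (t + δ) - f z' (t + δ)) :=
        apply_sub_smul_sub_le_mul_sub hm (hgrad · _ htδ) (hsc _ htδ) (hLip _ htδ) hα hαM y z'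
    _ ≤ _ := mul_le_mul_of_nonneg_left
        (hy ▸ apply_predictionStep_sub_le hgrad hft hLip hK1 hM hδ hε ht hz x z') (by linarith)

end TimeVarying

theorem alg1_ultimate_tracking_bound_general
    {E : Type*} [NormedAddCommGroup E] [InnerProductSpace ℝ E] [CompleteSpace E]
    (f : E → ℝ → ℝ) (gx : E → ℝ → E) (ft : E → ℝ → ℝ)
    (fxt : E → ℝ → E) (ftt : E → ℝ → ℝ) (xstar : ℝ → E)
    (m M K1 K2 K3 : ℝ) (hm : 0 < m) (hmM : m ≤ M)
    (hgrad : ∀ (x : E) (t : ℝ), 0 ≤ t → HasGradientAt (fun y => f y t) (gx x t) x)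
    (hft : ∀ (x : E) (t : ℝ), 0 ≤ t → HasDerivAt (fun s => f x s) (ft x t) t)
    (hsc : ∀ (t : ℝ), 0 ≤ t → ∀ x y : E, m * ‖x - y‖ ^ 2 ≤ ⟪gx x t - gx y t, x - y⟫)
    (hLip : ∀ (t : ℝ), 0 ≤ t → ∀ x y : E, ‖gx x t - gx y t‖ ≤ M * ‖x - y‖)
    (hK1 : ∀ (x : E) (t : ℝ), 0 ≤ t → |ft x t| ≤ K1)
    (hK2 : ∀ (x : E) (t : ℝ), 0 ≤ t → ‖fxt x t‖ ≤ K2)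
    (hK3 : ∀ (x : E) (t : ℝ), 0 ≤ t → |ftt x t| ≤ K3)
    (hmin : ∀ (t : ℝ), 0 ≤ t → IsMinOn (fun y => f y t) Set.univ (xstar t))
    (t0 δ ε α : ℝ) (ht0 : 0 ≤ t0) (hδ : 0 < δ) (hε : 0 < ε)
    (hα : 0 < α) (hαM : α ≤ 1 / (2 * M))
    (tseq : ℕ → ℝ) (htseq : ∀ k : ℕ, tseq k = t0 + (k : ℝ) * δ)
    (x xminus : ℕ → E)
    (hpred : ∀ k : ℕ, xminus (k + 1) =
      if ε ≤ ‖gx (x k) (tseq k)‖ then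
        x k - (δ * |ft (x k) (tseq k)| / ‖gx (x k) (tseq k)‖ ^ 2) • gx (x k) (tseq k)
      else x k)
    (hupd : ∀ k : ℕ, x (k + 1) = xminus (k + 1) - α • gx (xminus (k + 1)) (tseq (k + 1)))
    (κ γ μ ψ : ℝ)
    (hκ : κ = 1 - α * M / 2)
    (hγ : γ = 2 * K1 / δ + M / (2 * ε ^ 2) * K1 ^ 2 + K3 / 2 + K1 * K2 / ε)
    (hψ : ψ = δ * (K1 + δ / 2 * K3) + K2 ^ 2 * δ ^ 2 / (2 * m) * (M * δ / m + 2)) :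
    limsup (fun k : ℕ => f (x k) (tseq k) - f (xstar (tseq k)) (tseq k)) atTop ≤
        ψ / (4 * κ ^ 2 * α ^ 2 * m) + max (γ * δ ^ 2) (μ * δ) / (4 * κ ^ 2 * α ^ 2 * m ^ 2) ∧
      Tendsto (fun k : ℕ => (1 - 2 * κ * α * m) ^ k) atTop (nhds 0) := by
  have hM : 0 < M := hm.trans_le hmM
  have hK1' : 0 ≤ K1 := (abs_nonneg _).trans (hK1 (xstar t0) t0 ht0)
  have hK2' : 0 ≤ K2 := (norm_nonneg _).trans (hK2 (xstar t0) t0 ht0)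
  have hK3' : 0 ≤ K3 := (abs_nonneg _).trans (hK3 (xstar t0) t0 ht0)
  have hαM' : α * M ≤ 1 / 2 := by rw [le_div_iff₀ (by positivity)] at hαM; linarith
  have hκ0 : 0 < κ := by linarith
  have hc0 : 0 < 2 * κ * α * m := by positivity
  have hc1 : 2 * κ * α * m ≤ 1 := by nlinarith [mul_le_mul_of_nonneg_left hmM hα.le]
  have htk : ∀ k, 0 ≤ tseq k := fun k => by rw [htseq]; positivity
  have htsucc : ∀ k, tseq (k + 1) = tseq k + δ := fun k => by rw [htseq, htseq]; push_cast; ring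
  have hfstar : ∀ k y, f (xstar (tseq k)) (tseq k) ≤ f y (tseq k) := fun k y =>
    isMinOn_univ_iff.1 (hmin _ (htk k)) y
  have hdrift0 : 0 ≤ 2 * K1 * δ + M * δ ^ 2 * K1 ^ 2 / (2 * ε ^ 2) := by bound
  have hdrift : 2 * K1 * δ + M * δ ^ 2 * K1 ^ 2 / (2 * ε ^ 2) ≤ γ * δ ^ 2 := by
    have hγδ : γ * δ ^ 2 = 2 * K1 * δ + M * δ ^ 2 * K1 ^ 2 / (2 * ε ^ 2) +
        (K3 / 2 * δ ^ 2 + K1 * K2 / ε * δ ^ 2) := by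
      rw [hγ]; field_simp; ring
    rw [hγδ]
    exact le_add_of_nonneg_right (by bound)
  set e := fun k : ℕ => f (x k) (tseq k) - f (xstar (tseq k)) (tseq k)
  have hrec : ∀ k, e (k + 1) ≤ (1 - 2 * κ * α * m) * e k + γ * δ ^ 2 := by
    intro k
    have hstep := apply_correctionStep_sub_le_mul hm hgrad hft hsc hLip hK1 hM.le hδ.le hε hα.le
      (by linarith) (hκ ▸ hc1) (htk k) (hfstar k) (hpred k) (xstar (tseq k + δ))
    rw [← hκ] at hstep
    simp only [e]
    rw [hupd k, htsucc]
    nlinarith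
  have hlim := limsup_le_div_of_le_one_sub_mul_add hc0 hc1
    (isBoundedUnder_of ⟨0, fun k => sub_nonneg.2 (hfstar k _)⟩) hrec
  refine ⟨hlim.trans ?_, tendsto_pow_atTop_nhds_zero_of_lt_one (by linarith) (by linarith)⟩
  have hψ0 : 0 ≤ ψ := by rw [hψ]; bound
  calc γ * δ ^ 2 / (2 * κ * α * m) ≤ γ * δ ^ 2 / (2 * κ * α * m) ^ 2 :=
        div_le_div_of_nonneg_left (hdrift0.trans hdrift) (by positivity) (by nlinarith)
    _ ≤ max (γ * δ ^ 2) (μ * δ) / (4 * κ ^ 2 * α ^ 2 * m ^ 2) := by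
        rw [show (2 * κ * α * m) ^ 2 = 4 * κ ^ 2 * α ^ 2 * m ^ 2 by ring]
        gcongr
        exact le_max_left _ _
    _ ≤ _ := le_add_of_nonneg_left (div_nonneg hψ0 (by positivity))

/-- Remark 1, ultimate tracking bound of Algorithm 1: along the
iterates of Algorithm 1 with `0 < α ≤ 1/(2M)`,
`limsup_{k→∞} (f(x_k,t_k) − f*(t_k)) ≤ ψ/(4κ²α²m) + max(γδ², μδ)/(4κ²α²m²)`;
in particular `(1 − 2καm)^k → 0`, so the initialization error vanishes. -/
theorem alg1_ultimate_tracking_bound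
    {E : Type*} [NormedAddCommGroup E] [InnerProductSpace ℝ E] [CompleteSpace E]
    (f : E → ℝ → ℝ) (gx : E → ℝ → E) (ft : E → ℝ → ℝ)
    (fxt : E → ℝ → E) (ftt : E → ℝ → ℝ) (xstar : ℝ → E)
    (m M K1 K2 K3 : ℝ) (hm : 0 < m) (hmM : m ≤ M)
    (hgrad : ∀ (x : E) (t : ℝ), 0 ≤ t → HasGradientAt (fun y => f y t) (gx x t) x)
    (hft : ∀ (x : E) (t : ℝ), 0 ≤ t → HasDerivAt (fun s => f x s) (ft x t) t)
    (hfxt : ∀ (x : E) (t : ℝ), 0 ≤ t → HasDerivAt (fun s => gx x s) (fxt x t) t)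
    (hftt : ∀ (x : E) (t : ℝ), 0 ≤ t → HasDerivAt (fun s => ft x s) (ftt x t) t)
    (hsc : ∀ (t : ℝ), 0 ≤ t → ∀ x y : E, m * ‖x - y‖ ^ 2 ≤ ⟪gx x t - gx y t, x - y⟫)
    (hLip : ∀ (t : ℝ), 0 ≤ t → ∀ x y : E, ‖gx x t - gx y t‖ ≤ M * ‖x - y‖)
    (hK1 : ∀ (x : E) (t : ℝ), 0 ≤ t → |ft x t| ≤ K1)
    (hK2 : ∀ (x : E) (t : ℝ), 0 ≤ t → ‖fxt x t‖ ≤ K2)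
    (hK3 : ∀ (x : E) (t : ℝ), 0 ≤ t → |ftt x t| ≤ K3)
    (hmin : ∀ (t : ℝ), 0 ≤ t → IsMinOn (fun y => f y t) Set.univ (xstar t))
    (t0 δ ε α : ℝ) (ht0 : 0 ≤ t0) (hδ : 0 < δ) (hε : 0 < ε)
    (hα : 0 < α) (hαM : α ≤ 1 / (2 * M))
    (tseq : ℕ → ℝ) (htseq : ∀ k : ℕ, tseq k = t0 + (k : ℝ) * δ)
    (x xminus : ℕ → E)
    (hpred : ∀ k : ℕ, xminus (k + 1) =
      if ε ≤ ‖gx (x k) (tseq k)‖ then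
        x k - (δ * |ft (x k) (tseq k)| / ‖gx (x k) (tseq k)‖ ^ 2) • gx (x k) (tseq k)
      else x k)
    (hupd : ∀ k : ℕ, x (k + 1) = xminus (k + 1) - α • gx (xminus (k + 1)) (tseq (k + 1)))
    (κ γ μ ψ : ℝ)
    (hκ : κ = 1 - α * M / 2)
    (hγ : γ = 2 * K1 / δ + M / (2 * ε ^ 2) * K1 ^ 2 + K3 / 2 + K1 * K2 / ε)
    (hμ : μ = K1 + δ / 2 * K3)
    (hψ : ψ = δ * (K1 + δ / 2 * K3) + K2 ^ 2 * δ ^ 2 / (2 * m) * (M * δ / m + 2)) :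
    limsup (fun k : ℕ => f (x k) (tseq k) - f (xstar (tseq k)) (tseq k)) atTop ≤
        ψ / (4 * κ ^ 2 * α ^ 2 * m) + max (γ * δ ^ 2) (μ * δ) / (4 * κ ^ 2 * α ^ 2 * m ^ 2) ∧
      Tendsto (fun k : ℕ => (1 - 2 * κ * α * m) ^ k) atTop (nhds 0) :=
  alg1_ultimate_tracking_bound_general f gx ft fxt ftt xstar m M K1 K2 K3 hm hmM hgrad hft hsc hLip
    hK1 hK2 hK3 hmin t0 δ ε α ht0 hδ hε hα hαM tseq htseq x xminus hpred hupd κ γ μ ψ hκ hγ hψ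
end
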